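/- arXiv:2312.16808 — 9 statements merged into one kernel-verified Lean document; each statement's English description precedes it below -/
import Mathlib

section
/- Let R be an integral domain and a, b nonzero elements of R. If a is not a zero-divisor on R/(b), then for every integer n ≥ 1, b^n is not a zero-divisor on R/(a). -/
/-- If `a` is not a zero-divisor on `R/(b)`, then `b^n` is not a zero-divisor on `R/(a)`
for any `n ≥ 1`. -/
theorem stmt0 {R : Type*} [CommRing R] [IsDomain R] (a b : R) (ha : a ≠ 0) (hb : b ≠ 0)
    (h : ∀ x : R ⧸ Ideal.span {b}, Ideal.Quotient.mk (Ideal.span {b}) a * x = 0 → x = 0)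
    (n : ℕ) (hn : 1 ≤ n) :
    ∀ x : R ⧸ Ideal.span {a}, Ideal.Quotient.mk (Ideal.span {a}) (b ^ n) * x = 0 → x = 0 := by
  -- reformulate hypothesis as divisibility
  have h' : ∀ s : R, b ∣ a * s → b ∣ s := by
    intro s hs
    have := h (Ideal.Quotient.mk _ s) (by
      rw [← map_mul, Ideal.Quotient.eq_zero_iff_mem, Ideal.mem_span_singleton]
      exact hs)
    rwa [Ideal.Quotient.eq_zero_iff_mem, Ideal.mem_span_singleton] at this
  -- key divisibility statement, by induction on n
  have key : ∀ m : ℕ, ∀ r : R, a ∣ b ^ m * r → a ∣ r := by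
    intro m
    induction m with
    | zero => intro r hr; simpa using hr
    | succ k ih =>
      intro r hr
      have h1 : a ∣ b ^ k * (b * r) := by
        rw [show b ^ k * (b * r) = b ^ (k + 1) * r by ring]; exact hr
      obtain ⟨s, hs⟩ := ih (b * r) h1
      have h2 : b ∣ a * s := ⟨r, by rw [← hs]⟩
      obtain ⟨t, ht⟩ := h' s h2
      refine ⟨t, ?_⟩
      have : b * r = b * (a * t) := by rw [hs, ht]; ring
      exact mul_left_cancel₀ hb this
  intro x hx
  obtain ⟨r, rfl⟩ := Ideal.Quotient.mk_surjective x
  rw [← map_mul, Ideal.Quotient.eq_zero_iff_mem, Ideal.mem_span_singleton] at hx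
  rw [Ideal.Quotient.eq_zero_iff_mem, Ideal.mem_span_singleton]
  exact key n r hx
end

section
/- Let R be an integral domain and a, b nonzero elements of R. If b is not a zero-divisor on R/(a), then the ring R[T]/(bT − a) is an integral domain. -/
/-!
Put `t = a / b` in the fraction field `K` of `R`. Every `f ∈ R[T]` of degree `≤ n` with `f(t) = 0`
satisfies `(bT - a) ∣ bⁿ f`, by induction on `n` using `b f = (bT - a) f' + (a f' + b f(0))` for
`f = T f' + f(0)`. Since `b` is regular modulo `a`, the factors `b` can be cancelled, so `(bT - a)`
is the kernel of evaluation at `t` into the domain `K`, hence a prime ideal.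
-/

open Polynomial

namespace Polynomial

variable {R : Type*} [CommRing R] {a b : R}

theorem C_dvd_of_C_dvd_C_mul (hreg : ∀ c : R, a ∣ b * c → a ∣ c) {f : R[X]}
    (h : C a ∣ C b * f) : C a ∣ f := by
  rw [C_dvd_iff_dvd_coeff] at h ⊢
  intro i
  exact hreg _ (by simpa only [coeff_C_mul] using h i)

theorem dvd_of_dvd_C_mul [IsDomain R] (ha : a ≠ 0) (hreg : ∀ c : R, a ∣ b * c → a ∣ c)
    {f : R[X]} (h : C b * X - C a ∣ C b * f) : C b * X - C a ∣ f := by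
  obtain ⟨q, hq⟩ := h
  obtain ⟨w, hw⟩ : C a ∣ f - X * q :=
    C_dvd_of_C_dvd_C_mul hreg ⟨-q, by linear_combination hq⟩
  have hqw : C a * (q + C b * w) = 0 := by linear_combination hq - C b * hw
  have hq' : q = -(C b * w) := by
    linear_combination (mul_eq_zero.mp hqw).resolve_left (C_ne_zero.mpr ha)
  exact ⟨-w, by linear_combination hw + X * hq'⟩

theorem dvd_of_dvd_C_pow_mul [IsDomain R] (ha : a ≠ 0) (hreg : ∀ c : R, a ∣ b * c → a ∣ c)
    {f : R[X]} (n : ℕ) (h : C b * X - C a ∣ C b ^ n * f) : C b * X - C a ∣ f := by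
  induction n generalizing f with
  | zero => simpa using h
  | succ n ih => exact dvd_of_dvd_C_mul ha hreg (ih (by rwa [pow_succ, mul_assoc] at h))

variable {S : Type*} [CommRing S] [Algebra R S]

theorem dvd_C_pow_mul_of_aeval_eq_zero (hinj : Function.Injective (algebraMap R S)) {t : S}
    (ht : algebraMap R S b * t = algebraMap R S a) {n : ℕ} {f : R[X]} (hdeg : f.natDegree ≤ n)
    (hf : aeval t f = 0) : C b * X - C a ∣ C b ^ n * f := by
  induction n generalizing f with
  | zero =>
    rw [eq_C_of_natDegree_le_zero hdeg, aeval_C] at hf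
    rw [eq_C_of_natDegree_le_zero hdeg, hinj (hf.trans (map_zero _).symm)]
    simp
  | succ n ih =>
    set g := C a * f.divX + C (b * f.coeff 0) with hg_def
    have hsplit : C b * f = (C b * X - C a) * f.divX + g := by
      conv_lhs => rw [← X_mul_divX_add f]
      rw [hg_def, C_mul]
      ring
    have hg : aeval t g = 0 := by
      have hft := congrArg (aeval t) (X_mul_divX_add f)
      simp only [map_add, map_mul, aeval_X, aeval_C, hf] at hft
      simp only [g, map_add, map_mul, aeval_C, ← ht]
      linear_combination algebraMap R S b * hft
    have hgdeg : g.natDegree ≤ n := by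
      refine (natDegree_add_le _ _).trans (max_le ((natDegree_C_mul_le _ _).trans ?_) ?_)
      · rw [natDegree_divX_eq_natDegree_tsub_one]
        omega
      · exact (natDegree_C _).trans_le n.zero_le
    rw [pow_succ, mul_assoc, hsplit, mul_add]
    exact dvd_add ((dvd_mul_right _ _).mul_left _) (ih hgdeg hg)

theorem ker_aeval_eq_span_C_mul_X_sub_C [IsDomain R] (ha : a ≠ 0)
    (hreg : ∀ c : R, a ∣ b * c → a ∣ c) (hinj : Function.Injective (algebraMap R S)) {t : S}
    (ht : algebraMap R S b * t = algebraMap R S a) :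
    RingHom.ker (aeval t) = Ideal.span {C b * X - C a} := by
  apply le_antisymm
  · intro f hf
    exact Ideal.mem_span_singleton.mpr <|
      dvd_of_dvd_C_pow_mul ha hreg _ (dvd_C_pow_mul_of_aeval_eq_zero hinj ht le_rfl hf)
  · rw [Ideal.span_singleton_le_iff_mem, RingHom.mem_ker]
    simp [ht]

end Polynomial

/-- If `b` is not a zero-divisor on `R/(a)`, then `R[T]/(bT - a)` is an integral domain. -/
theorem stmt2 {R : Type*} [CommRing R] [IsDomain R] (a b : R) (ha : a ≠ 0) (hb : b ≠ 0)
    (h : ∀ x : R ⧸ Ideal.span {a}, Ideal.Quotient.mk (Ideal.span {a}) b * x = 0 → x = 0) :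
    IsDomain (Polynomial R ⧸
      Ideal.span {Polynomial.C b * Polynomial.X - Polynomial.C a}) := by
  have hreg (c : R) (hc : a ∣ b * c) : a ∣ c := by
    rw [← Ideal.Quotient.eq_zero_iff_dvd] at hc ⊢
    exact h _ (by rwa [← map_mul])
  let K := FractionRing R
  have hinj : Function.Injective (algebraMap R K) := IsFractionRing.injective R K
  have ht : algebraMap R K b * (algebraMap R K a / algebraMap R K b) = algebraMap R K a :=
    mul_div_cancel₀ _ ((map_ne_zero_iff _ hinj).mpr hb)
  rw [← ker_aeval_eq_span_C_mul_X_sub_C ha hreg hinj ht]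
  exact @Ideal.Quotient.isDomain _ _ _ _ (RingHom.ker_isPrime _)
end

section
/- Let k be a field, n ≥ 1, and let P(X₁,…,Xₙ,Z) ∈ k[X₁,…,Xₙ,Z] be monic in Z with deg_Z P ≥ 1. For any d = (d₁,…,dₙ) with each dᵢ ≥ 1, the polynomial X₁^{d₁}⋯Xₙ^{dₙ}·Y − P(X₁,…,Xₙ,Z) is irreducible in k[X₁,…,Xₙ,Y,Z]. -/
open Polynomial

/-- For `P ∈ k[X₁,…,Xₙ][Z]` monic in `Z` of degree ≥ 1 and `dᵢ ≥ 1`, the polynomial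
`X₁^{d₁}⋯Xₙ^{dₙ}·Y − P` is irreducible in `k[X₁,…,Xₙ,Y,Z] = (k[X₁,…,Xₙ][Z])[Y]`. -/
theorem stmt3 {k : Type*} [Field k] (n : ℕ) (hn : 1 ≤ n) (d : Fin n → ℕ) (hd : ∀ i, 1 ≤ d i)
    (P : Polynomial (MvPolynomial (Fin n) k)) (hP : P.Monic) (hdeg : 1 ≤ P.natDegree) :
    Irreducible
      (C (C (∏ i, MvPolynomial.X i ^ d i)) * X - C P :
        Polynomial (Polynomial (MvPolynomial (Fin n) k))) := by
  set c : MvPolynomial (Fin n) k := ∏ i, MvPolynomial.X i ^ d i with hcdef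
  set q : Polynomial (Polynomial (MvPolynomial (Fin n) k)) := C (C c) * X - C P with hqdef
  have hc : c ≠ 0 := by
    rw [hcdef]
    exact Finset.prod_ne_zero_iff.mpr fun i _ => pow_ne_zero _ (MvPolynomial.X_ne_zero i)
  have hCc : (C c : Polynomial (MvPolynomial (Fin n) k)) ≠ 0 := by simpa using hc
  have hq' : q = C (C c) * X + C (-P) := by rw [hqdef, map_neg]; ring
  have hdegq : q.natDegree = 1 := by rw [hq']; exact natDegree_linear hCc
  have hqne : q ≠ 0 := by intro h; rw [h] at hdegq; simp at hdegq
  have hcoeff1 : q.coeff 1 = C c := by simp [hqdef, coeff_C]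
  have hcoeff0 : q.coeff 0 = -P := by simp [hqdef]
  have key : ∀ r : Polynomial (MvPolynomial (Fin n) k), C r ∣ q → IsUnit r := by
    intro r hr
    obtain ⟨t, ht⟩ := hr
    have h1 : r ∣ C c := ⟨t.coeff 1, by rw [← hcoeff1, ht, coeff_C_mul]⟩
    have h0 : r ∣ P := by
      have : r ∣ -P := ⟨t.coeff 0, by rw [← hcoeff0, ht, coeff_C_mul]⟩
      exact (dvd_neg).mp this
    have hr0 : r.natDegree = 0 := by
      have := Polynomial.natDegree_le_of_dvd h1 hCc
      simpa using this
    have hrC : r = C (r.coeff 0) := eq_C_of_natDegree_eq_zero hr0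
    have hdvd1 : r.coeff 0 ∣ P.coeff P.natDegree := by
      rw [hrC] at h0
      exact (C_dvd_iff_dvd_coeff _ _).mp h0 _
    rw [hP.coeff_natDegree] at hdvd1
    rw [hrC]
    exact isUnit_C.mpr (isUnit_of_dvd_one hdvd1)
  constructor
  · intro h
    rw [Polynomial.natDegree_eq_zero_of_isUnit h] at hdegq
    exact one_ne_zero hdegq.symm
  · intro a b hab
    have ha : a ≠ 0 := by rintro rfl; rw [zero_mul] at hab; exact hqne hab
    have hb : b ≠ 0 := by rintro rfl; rw [mul_zero] at hab; exact hqne hab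
    have hsum : a.natDegree + b.natDegree = 1 := by
      rw [← Polynomial.natDegree_mul ha hb, ← hab, hdegq]
    rcases Nat.eq_zero_or_pos a.natDegree with ha0 | hapos
    · left
      have haC : a = C (a.coeff 0) := eq_C_of_natDegree_eq_zero ha0
      have : IsUnit (a.coeff 0) := key _ (by rw [← haC, hab]; exact ⟨b, rfl⟩)
      rw [haC]; exact isUnit_C.mpr this
    · right
      have hb0 : b.natDegree = 0 := by omega
      have hbC : b = C (b.coeff 0) := eq_C_of_natDegree_eq_zero hb0
      have : IsUnit (b.coeff 0) := key _ (by rw [← hbC, hab]; exact ⟨a, mul_comm a b⟩)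
      rw [hbC]; exact isUnit_C.mpr this
end

section
/- Let k be a field, n ≥ 1, d = (d₁,…,dₙ) with each dᵢ ≥ 1, and P(X,Z) ∈ k[X₁,…,Xₙ,Z] monic in Z with deg_Z P ≥ 1. Then the quotient ring R = k[X₁,…,Xₙ,Y,Z]/(X^d·Y − P(X,Z)) is an integral domain, where X^d = X₁^{d₁}⋯Xₙ^{dₙ}. -/
open Polynomial MvPolynomial

/-!
Write `A = k[X₁,…,Xₙ]`, so that `k[X, Y, Z] ≅ A[Z][Y]`. There the generator becomes the
polynomial `C (X^d) · Y - C P`, linear in `Y` over the UFD `A[Z]`. Its two coefficients have no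
common non-unit factor: a divisor of the nonzero constant `X^d` has `Z`-degree `0`, and a
constant dividing the monic `P` divides its leading coefficient `1`. A linear polynomial with
relatively prime coefficients is irreducible, hence prime in the UFD `A[Z][Y]`.
-/

theorem Polynomial.Monic.isRelPrime_C {R : Type*} [CommRing R] [IsDomain R] {p : R[X]}
    (hp : p.Monic) {b : R} (hb : b ≠ 0) : IsRelPrime (C b) p := by
  intro a hab hap
  obtain ⟨a₀, rfl⟩ : ∃ a₀, a = C a₀ :=
    ⟨_, eq_C_of_natDegree_eq_zero <| by simpa using natDegree_le_of_dvd hab (C_ne_zero.mpr hb)⟩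
  have : a₀ ∣ p.leadingCoeff := (C_dvd_iff_dvd_coeff _ _).mp hap _
  exact isUnit_C.mpr (isUnit_of_dvd_one (hp.leadingCoeff ▸ this))

theorem Polynomial.prime_C_C_mul_X_sub_C_of_monic {R : Type*} [CommRing R] [IsDomain R]
    [UniqueFactorizationMonoid R] {b : R} (hb : b ≠ 0) {p : R[X]} (hp : p.Monic) :
    Prime (C (C b) * X - C p : R[X][X]) := by
  rw [sub_eq_add_neg, ← C_neg]
  exact (irreducible_C_mul_X_add_C (C_ne_zero.mpr hb) (hp.isRelPrime_C hb).neg_right).prime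

namespace MvPolynomial

/-- `X (inr 0)` is the outer variable and `X (inr 1)` the inner one. -/
noncomputable def sumFinTwoAlgEquiv (σ R : Type*) [CommSemiring R] :
    MvPolynomial (σ ⊕ Fin 2) R ≃ₐ[R] (MvPolynomial σ R)[X][X] :=
  AlgEquiv.ofAlgHom
    (aeval (Sum.elim (fun i => Polynomial.C (Polynomial.C (X i)))
      ![Polynomial.X, Polynomial.C Polynomial.X]))
    (Polynomial.eval₂AlgHom
      (Polynomial.eval₂AlgHom (rename Sum.inl) (X (Sum.inr 1)) fun _ => Commute.all _ _)
      (X (Sum.inr 0)) fun _ => Commute.all _ _)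
    (by
      ext : 1
      · ext : 1
        · exact algHom_ext fun i => by simp
        · simp
      · simp)
    (algHom_ext fun
      | .inl i => by simp
      | .inr j => by fin_cases j <;> simp)

variable {σ R : Type*}

@[simp]
theorem sumFinTwoAlgEquiv_symm_C [CommSemiring R] (p : (MvPolynomial σ R)[X]) :
    (sumFinTwoAlgEquiv σ R).symm (Polynomial.C p) =
      p.eval₂ (rename Sum.inl).toRingHom (X (Sum.inr 1)) := by
  simp [sumFinTwoAlgEquiv]

@[simp]
theorem sumFinTwoAlgEquiv_symm_X [CommSemiring R] :
    (sumFinTwoAlgEquiv σ R).symm Polynomial.X = X (Sum.inr 0) := by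
  simp [sumFinTwoAlgEquiv]

theorem prime_rename_mul_X_sub_eval₂_of_monic [CommRing R] [IsDomain R]
    [UniqueFactorizationMonoid R] {b : MvPolynomial σ R} (hb : b ≠ 0)
    {p : (MvPolynomial σ R)[X]} (hp : p.Monic) :
    Prime (rename Sum.inl b * X (Sum.inr 0) -
      p.eval₂ (rename Sum.inl).toRingHom (X (Sum.inr 1)) : MvPolynomial (σ ⊕ Fin 2) R) := by
  have hpre : (sumFinTwoAlgEquiv σ R).symm (Polynomial.C (Polynomial.C b) * Polynomial.X -
      Polynomial.C p) = rename Sum.inl b * X (Sum.inr 0) -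
        p.eval₂ (rename Sum.inl).toRingHom (X (Sum.inr 1)) := by
    rw [map_sub (sumFinTwoAlgEquiv σ R).symm, map_mul, sumFinTwoAlgEquiv_symm_C,
      sumFinTwoAlgEquiv_symm_C, sumFinTwoAlgEquiv_symm_X, Polynomial.eval₂_C]
    rfl
  rw [← hpre, MulEquiv.prime_iff]
  exact prime_C_C_mul_X_sub_C_of_monic hb hp

end MvPolynomial

theorem stmt4_general {k : Type*} [Field k] (n : ℕ) (d : Fin n → ℕ)
    (P : Polynomial (MvPolynomial (Fin n) k)) (hP : P.Monic) :
    IsDomain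
      (MvPolynomial (Fin n ⊕ Fin 2) k ⧸
        Ideal.span
          {(∏ i, MvPolynomial.X (Sum.inl i) ^ d i) * MvPolynomial.X (Sum.inr 0) -
            Polynomial.eval₂
              (MvPolynomial.rename (Sum.inl : Fin n → Fin n ⊕ Fin 2)).toRingHom
              (MvPolynomial.X (Sum.inr 1)) P}) := by
  have hb : (∏ i, X i ^ d i : MvPolynomial (Fin n) k) ≠ 0 :=
    Finset.prod_ne_zero_iff.mpr fun i _ => pow_ne_zero _ (X_ne_zero i)
  have hprime := prime_rename_mul_X_sub_eval₂_of_monic hb hP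
  simp only [map_prod, map_pow, rename_X] at hprime
  rw [Ideal.Quotient.isDomain_iff_prime]
  exact (Ideal.span_singleton_prime hprime.ne_zero).mpr hprime

/-- In `k[X₁,…,Xₙ,Y,Z]`, realized as `MvPolynomial (Fin n ⊕ Fin 2) k` with `inr 0 = Y` and
`inr 1 = Z`, the quotient by `(X^d·Y − P(X,Z))` is an integral domain, where
`P ∈ k[X₁,…,Xₙ][Z]` is monic in `Z` of `Z`-degree ≥ 1 and all `dᵢ ≥ 1`. -/
theorem stmt4 {k : Type*} [Field k] (n : ℕ) (hn : 1 ≤ n) (d : Fin n → ℕ) (hd : ∀ i, 1 ≤ d i)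
    (P : Polynomial (MvPolynomial (Fin n) k)) (hP : P.Monic) (hdeg : 1 ≤ P.natDegree) :
    IsDomain
      (MvPolynomial (Fin n ⊕ Fin 2) k ⧸
        Ideal.span
          {(∏ i, MvPolynomial.X (Sum.inl i) ^ d i) * MvPolynomial.X (Sum.inr 0) -
            Polynomial.eval₂
              (MvPolynomial.rename (Sum.inl : Fin n → Fin n ⊕ Fin 2)).toRingHom
              (MvPolynomial.X (Sum.inr 1)) P}) :=
  stmt4_general n d P hP
end

section
/- Let R be an affine domain over a field k and φ a nontrivial exponential map on R. If x ∈ R \ R^φ is such that deg_W φ_W(x) is of minimal positive degree among elements of R, and c ∈ R is the leading W-coefficient of φ_W(x), then c ∈ R^φ and R[c^{-1}] = R^φ[c^{-1}][x], i.e., the localization of R at c is a polynomial ring in x over the localization of R^φ at c. -/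
/-!
Comparing `W^m`-coefficients in `φ_T ∘ φ_W = φ_{W+T}` shows that `φ` sends the `m`-th
coefficient of `φ a` to the `m`-th Hasse derivative of `φ a`. Hence leading coefficients are
invariant, and whenever `(d choose i) ≠ 0` in `R`, where `d = deg φ(a)`, some element has
degree `i`. With Lucas' theorem this forces the minimal positive degree `n = deg φ(x)` to divide
every degree: in characteristic `p`, `n` is a power of `p` and `d % n` is again a degree.
Writing `d = n q` and `b` for the leading coefficient of `φ a`, the element `c^q a - b x^q` has
smaller degree, so induction gives `c^m a ∈ R^φ[x]` for some `m`. Finally `x` is transcendental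
over `R^φ`, because `φ` turns an algebraic relation for `x` into one for the nonconstant
polynomial `φ x`.
-/

open Polynomial
open scoped nonZeroDivisors

/-- An exponential map on a `k`-algebra `R`: a `k`-algebra homomorphism `φ : R → R[W]`
with `ε₀ ∘ φ = id` and the coassociativity condition `φ_T φ_W = φ_{W+T}`. -/
def IsExponentialMap {k R : Type*} [CommRing k] [CommRing R] [Algebra k R]
    (φ : R →ₐ[k] Polynomial R) : Prop :=
  (∀ a : R, (φ a).eval 0 = a) ∧
  (∀ a : R, (φ a).map φ.toRingHom =
      (φ a).eval₂ (C.comp C) (Polynomial.X + Polynomial.C Polynomial.X))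

namespace Nat

theorem not_dvd_choose_mod_pow {p : ℕ} [Fact p.Prime] (e d : ℕ) :
    ¬ p ∣ d.choose (d % p ^ e) := by
  induction e generalizing d with
  | zero =>
    rw [pow_zero, mod_one, choose_zero_right]
    exact (Fact.out : p.Prime).not_dvd_one
  | succ e ih =>
    have hp : p ∣ p ^ (e + 1) := dvd_pow_self p e.succ_ne_zero
    have lucas := Choose.choose_modEq_choose_mod_mul_choose_div_nat (p := p) (n := d)
      (k := d % p ^ (e + 1))
    rw [mod_mod_of_dvd d hp, choose_self, one_mul, pow_succ', mod_mul_right_div_self] at lucas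
    rw [pow_succ']
    exact fun hdvd => ih (d / p) (modEq_zero_iff_dvd.mp
      (lucas.symm.trans (modEq_zero_iff_dvd.mpr hdvd)))

theorem dvd_of_choose_closed {q n : ℕ} (hq : q.Prime ∨ q = 0) {S : Set ℕ}
    (hS : ∀ d ∈ S, ∀ i ≤ d, ¬ q ∣ d.choose i → i ∈ S) (hnS : n ∈ S) (hn : 0 < n)
    (hmin : ∀ i ∈ S, 0 < i → n ≤ i) {d : ℕ} (hd : d ∈ S) : n ∣ d := by
  rcases hq with hq | rfl
  · have := Fact.mk hq
    have hpow : n = q ^ multiplicity q n := by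
      refine Choose.eq_pow_multiplicity_of_choose_modEq_zero_nat hn fun i hi => ?_
      rw [Finset.mem_Icc] at hi
      by_contra h
      exact (hmin i (hS n hnS i (by omega) (h ∘ modEq_zero_iff_dvd.mpr)) (by omega)).not_gt
        (by omega)
    have hmod : d % n ∈ S := hS d hd _ (mod_le d n) (hpow ▸ not_dvd_choose_mod_pow _ d)
    refine dvd_of_mod_eq_zero (Nat.eq_zero_of_not_pos fun h => ?_)
    exact (hmin _ hmod h).not_gt (mod_lt d hn)
  · have : n ≤ 1 := hmin 1 (hS n hnS 1 hn (by simpa using hn.ne')) one_pos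
    rw [show n = 1 by omega]
    exact one_dvd d

end Nat

namespace Polynomial

theorem hasseDeriv_map {R S : Type*} [Semiring R] [Semiring S] (f : R →+* S) (k : ℕ)
    (p : R[X]) :
    hasseDeriv k (p.map f) = (hasseDeriv k p).map f := by
  ext n
  simp [hasseDeriv_coeff]

theorem coeff_eval₂_X_add_C_X {R : Type*} [CommRing R] (p : R[X]) (m : ℕ) :
    (p.eval₂ (C.comp C) (X + C X)).coeff m = hasseDeriv m p := by
  rw [← eval₂_map, ← comp, ← taylor_apply, taylor_coeff, hasseDeriv_map, eval_map,
    eval₂_C_X]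

end Polynomial

theorem transcendental_of_natDegree_apply_ne_zero {k R : Type*} [CommRing k] [CommRing R]
    [IsDomain R] [Algebra k R] {φ : R →ₐ[k] R[X]} (S : Subalgebra k R)
    (hS : ∀ a ∈ S, φ a = C a) {x : R} (hx : (φ x).natDegree ≠ 0) : Transcendental S x := by
  have hφx : Transcendental R (φ x) := (φ x).transcendental hx
    (mem_nonZeroDivisors_of_ne_zero (leadingCoeff_ne_zero.mpr (by rintro h; simp [h] at hx)))
  refine Transcendental.of_ringHom_of_comp_eq (RingHom.id S) (φ : R →+* R[X])
    (hφx.restrictScalars Subtype.val_injective) Function.injective_id ?_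
  ext r : 1
  exact (hS r r.2).symm

namespace IsExponentialMap

variable {k R : Type*} [CommRing k] [CommRing R] [Algebra k R] {φ : R →ₐ[k] R[X]}

theorem coeff_zero_apply (hφ : IsExponentialMap φ) (a : R) : (φ a).coeff 0 = a := by
  rw [coeff_zero_eq_eval_zero, hφ.1]

theorem apply_coeff (hφ : IsExponentialMap φ) (a : R) (m : ℕ) :
    φ ((φ a).coeff m) = hasseDeriv m (φ a) := by
  rw [← coeff_eval₂_X_add_C_X, ← hφ.2 a, coeff_map]
  rfl

theorem apply_eq_C_iff (hφ : IsExponentialMap φ) {a : R} :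
    φ a = C a ↔ (φ a).natDegree = 0 := by
  refine ⟨fun h => h ▸ natDegree_C a, fun h => ?_⟩
  rw [eq_C_of_natDegree_eq_zero h, hφ.coeff_zero_apply]

theorem apply_leadingCoeff (hφ : IsExponentialMap φ) (a : R) :
    φ (φ a).leadingCoeff = C (φ a).leadingCoeff := by
  rw [leadingCoeff, hφ.apply_coeff, hasseDeriv_natDegree_eq_C, leadingCoeff]

theorem exists_natDegree_eq [IsDomain R] (hφ : IsExponentialMap φ) (a : R) {i : ℕ}
    (hi : i ≤ (φ a).natDegree) (hchoose : ((φ a).natDegree.choose i : R) ≠ 0) :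
    ∃ b, (φ b).natDegree = i := by
  set d := (φ a).natDegree
  by_cases ha : φ a = 0
  · have hd : d = 0 := by simp [d, ha]
    exact ⟨a, by omega⟩
  refine ⟨(φ a).coeff (d - i), le_antisymm ?_ (le_natDegree_of_ne_zero ?_)⟩
  · rw [hφ.apply_coeff]
    exact (natDegree_hasseDeriv_le _ _).trans (by omega)
  · rw [hφ.apply_coeff, hasseDeriv_coeff, Nat.add_sub_cancel' hi, Nat.choose_symm hi]
    exact mul_ne_zero hchoose (leadingCoeff_ne_zero.mpr ha)

theorem natDegree_dvd [IsDomain R] (hφ : IsExponentialMap φ) {x : R} (hx : φ x ≠ C x)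
    (hmin : ∀ y : R, φ y ≠ C y → (φ x).natDegree ≤ (φ y).natDegree) (a : R) :
    (φ x).natDegree ∣ (φ a).natDegree := by
  refine Nat.dvd_of_choose_closed (CharP.char_is_prime_or_zero R (ringChar R))
    (S := Set.range fun a => (φ a).natDegree) ?_ ⟨x, rfl⟩
    (Nat.pos_of_ne_zero (hφ.apply_eq_C_iff.not.mp hx)) ?_ ⟨a, rfl⟩
  · rintro _ ⟨b, rfl⟩ i hi hchoose
    exact hφ.exists_natDegree_eq b hi ((ringChar.spec R _).not.mpr hchoose)
  · rintro _ ⟨y, rfl⟩ hy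
    exact hmin y (hφ.apply_eq_C_iff.not.mpr hy.ne')

theorem natDegree_apply_sub_lt [IsDomain R] (hφ : IsExponentialMap φ) {x a : R} {q : ℕ}
    (hq : (φ a).natDegree = (φ x).natDegree * q) (ha : 0 < (φ a).natDegree) :
    (φ ((φ x).leadingCoeff ^ q * a - (φ a).leadingCoeff * x ^ q)).natDegree <
      (φ a).natDegree := by
  set c := (φ x).leadingCoeff
  set b := (φ a).leadingCoeff
  have ha0 : φ a ≠ 0 := by rintro h; simp [h] at ha
  have hx0 : φ x ≠ 0 := by rintro h; simp [h] at hq; omega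
  have hc : c ^ q ≠ 0 := pow_ne_zero _ (leadingCoeff_ne_zero.mpr hx0)
  have hb : b ≠ 0 := leadingCoeff_ne_zero.mpr ha0
  have hφ' : φ (c ^ q * a - b * x ^ q) = C (c ^ q) * φ a - C b * φ x ^ q := by
    simp only [map_sub, map_mul, map_pow, hφ.apply_leadingCoeff, c, b]
  have hdeg : (C (c ^ q) * φ a).degree = (C b * φ x ^ q).degree := by
    rw [degree_C_mul hc, degree_C_mul hb, degree_eq_natDegree ha0,
      degree_eq_natDegree (pow_ne_zero _ hx0), natDegree_pow, hq, mul_comm]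
  have hlc : (C (c ^ q) * φ a).leadingCoeff = (C b * φ x ^ q).leadingCoeff := by
    simp only [leadingCoeff_mul, leadingCoeff_C, leadingCoeff_pow, c, b, mul_comm]
  have hlt := degree_sub_lt_left hdeg (mul_ne_zero (C_ne_zero.mpr hc) ha0) hlc
  rw [degree_C_mul hc, degree_eq_natDegree ha0] at hlt
  rw [hφ']
  by_cases h0 : C (c ^ q) * φ a - C b * φ x ^ q = 0
  · rw [h0, natDegree_zero]; exact ha
  · exact (natDegree_lt_iff_degree_lt h0).mpr hlt

theorem exists_pow_mul_mem_adjoin [IsDomain R] (hφ : IsExponentialMap φ) (S : Subalgebra k R)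
    (hS : ∀ a, φ a = C a → a ∈ S) {x : R} (hx : φ x ≠ C x)
    (hmin : ∀ y : R, φ y ≠ C y → (φ x).natDegree ≤ (φ y).natDegree) (a : R) :
    ∃ m, (φ x).leadingCoeff ^ m * a ∈ Algebra.adjoin S {x} := by
  have hfixed : ∀ r, φ r = C r → r ∈ Algebra.adjoin S {x} :=
    fun r hr => Subalgebra.algebraMap_mem _ (⟨r, hS r hr⟩ : S)
  induction hd : (φ a).natDegree using Nat.strong_induction_on generalizing a with
  | _ d ih =>
  rcases Nat.eq_zero_or_pos d with rfl | hd0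
  · exact ⟨0, by simpa using hfixed a (hφ.apply_eq_C_iff.mpr hd)⟩
  obtain ⟨q, hq⟩ := hφ.natDegree_dvd hx hmin a
  obtain ⟨m, hm⟩ := ih _ (hd ▸ hφ.natDegree_apply_sub_lt hq (hd ▸ hd0)) _ rfl
  refine ⟨m + q, ?_⟩
  have hsplit : (φ x).leadingCoeff ^ (m + q) * a = (φ x).leadingCoeff ^ m *
      ((φ x).leadingCoeff ^ q * a - (φ a).leadingCoeff * x ^ q) +
      (φ x).leadingCoeff ^ m * (φ a).leadingCoeff * x ^ q := by ring
  rw [hsplit]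
  have hxS : x ∈ Algebra.adjoin S {x} := Algebra.self_mem_adjoin_singleton S x
  exact add_mem hm (mul_mem (mul_mem (pow_mem (hfixed _ (hφ.apply_leadingCoeff x)) m)
    (hfixed _ (hφ.apply_leadingCoeff a))) (pow_mem hxS q))

end IsExponentialMap

section Localization

variable {A B : Type*} [CommRing A] [CommRing B] [Algebra A B] {c : A} {x : B}
  (L : Localization.Away c →+* Localization.Away (algebraMap A B c))

theorem eval₂_map_algebraMap_localization
    (hL : L.comp (algebraMap A _) = (algebraMap B _).comp (algebraMap A B)) (P : A[X]) :
    (P.map (algebraMap A (Localization.Away c))).eval₂ L (algebraMap B _ x) =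
      algebraMap B _ (aeval x P) := by
  rw [eval₂_map, hL, aeval_def, hom_eval₂]

theorem injective_eval₂_of_transcendental (hc : algebraMap A B c ∈ B⁰)
    (hx : Transcendental A x)
    (hL : L.comp (algebraMap A _) = (algebraMap B _).comp (algebraMap A B)) :
    Function.Injective (eval₂ L (algebraMap B _ x)) := by
  rw [← coe_eval₂RingHom, injective_iff_map_eq_zero]
  intro P hP
  rw [coe_eval₂RingHom] at hP
  obtain ⟨b, hbM, hb⟩ := IsLocalization.integerNormalization_spec (Submonoid.powers c) P
  set Q := IsLocalization.integerNormalization (Submonoid.powers c) P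
  have hQ : aeval x Q = 0 := by
    refine IsLocalization.injective (Localization.Away (algebraMap A B c))
      (Submonoid.powers_le.mpr hc) ?_
    rw [← eval₂_map_algebraMap_localization L hL, hb, Algebra.smul_def, eval₂_mul, hP,
      mul_zero, map_zero]
  have hunit : IsUnit (algebraMap A (Localization.Away c)[X] b) :=
    (IsLocalization.map_units (Localization.Away c) ⟨b, hbM⟩).map C
  rw [transcendental_iff.mp hx Q hQ, Polynomial.map_zero, Algebra.smul_def] at hb
  exact hunit.mul_right_eq_zero.mp hb.symm

theorem surjective_eval₂_of_forall_exists_pow_mul_mem_adjoin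
    (hsurj : ∀ b : B, ∃ m, algebraMap A B c ^ m * b ∈ Algebra.adjoin A {x})
    (hL : L.comp (algebraMap A _) = (algebraMap B _).comp (algebraMap A B)) :
    Function.Surjective (eval₂ L (algebraMap B _ x)) := by
  intro z
  obtain ⟨⟨r, _, t, rfl⟩, hz⟩ := IsLocalization.surj (Submonoid.powers (algebraMap A B c)) z
  obtain ⟨m, P, hP⟩ : ∃ m, ∃ P : A[X], aeval x P = algebraMap A B c ^ m * r := by
    obtain ⟨m, hm⟩ := hsurj r
    rw [Algebra.adjoin_singleton_eq_range_aeval] at hm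
    exact ⟨m, hm⟩
  dsimp only at hz
  have hinv : algebraMap B _ (algebraMap A B c) * L (IsLocalization.Away.invSelf c) = 1 := by
    rw [← RingHom.comp_apply, ← hL, RingHom.comp_apply, ← map_mul,
      IsLocalization.Away.mul_invSelf, map_one]
  refine ⟨C (IsLocalization.Away.invSelf c ^ (m + t)) * P.map (algebraMap A _), ?_⟩
  rw [eval₂_mul, eval₂_C, eval₂_map_algebraMap_localization L hL, hP, map_mul, ← hz, map_pow,
    map_pow, map_pow]
  generalize L (IsLocalization.Away.invSelf c) = u at hinv ⊢
  calc _ = z * (algebraMap B _ (algebraMap A B c) * u) ^ (m + t) := by ring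
    _ = z := by rw [hinv, one_pow, mul_one]

end Localization

/-- Local slice property: if `x ∉ R^φ` has `deg_W φ(x)` of minimal positive degree and `c`
is the leading `W`-coefficient of `φ(x)`, then `c ∈ R^φ` and `R[c⁻¹] = R^φ[c⁻¹][x]`, i.e.
the localization `R[c⁻¹]` is a polynomial ring in `x` over `R^φ[c⁻¹]`. -/
theorem stmt6 {k R : Type*} [Field k] [CommRing R] [IsDomain R] [Algebra k R]
    (φ : R →ₐ[k] Polynomial R) (hφ : IsExponentialMap φ)
    (Rφ : Subalgebra k R) (hRφ : ∀ a : R, a ∈ Rφ ↔ φ a = Polynomial.C a)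
    (x : R) (hx : φ x ≠ Polynomial.C x)
    (hmin : ∀ y : R, φ y ≠ Polynomial.C y → (φ x).natDegree ≤ (φ y).natDegree)
    (c : R) (hc : c = (φ x).leadingCoeff) :
    ∃ hcφ : c ∈ Rφ,
      Function.Bijective
        (Polynomial.eval₂
          (IsLocalization.Away.lift (S := Localization.Away (⟨c, hcφ⟩ : Rφ))
            (g := (algebraMap R (Localization.Away c)).comp (algebraMap ↥Rφ R))
            (⟨c, hcφ⟩ : Rφ)
            (by
              simpa using
                IsLocalization.Away.algebraMap_isUnit (S := Localization.Away c) c))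
          (algebraMap R (Localization.Away c) x)) := by
  subst hc
  have hdeg : (φ x).natDegree ≠ 0 := hφ.apply_eq_C_iff.not.mp hx
  have hc : (φ x).leadingCoeff ∈ R⁰ :=
    mem_nonZeroDivisors_of_ne_zero (leadingCoeff_ne_zero.mpr (ne_zero_of_natDegree_gt
      (Nat.pos_of_ne_zero hdeg)))
  refine ⟨(hRφ _).2 (hφ.apply_leadingCoeff x), ?_, ?_⟩
  · exact injective_eval₂_of_transcendental _ hc
      (transcendental_of_natDegree_apply_ne_zero Rφ (fun a ↦ (hRφ a).1) hdeg)
      (IsLocalization.lift_comp _)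
  · exact surjective_eval₂_of_forall_exists_pow_mul_mem_adjoin _
      (hφ.exists_pow_mul_mem_adjoin Rφ (fun a ↦ (hRφ a).2) hx hmin)
      (IsLocalization.lift_comp _)
end

section
/- Let R be an affine domain over a field k and φ an exponential map on R. Then R^φ is algebraically closed in R: any element of R that is algebraic over R^φ (i.e., is a root of a nonzero polynomial with coefficients in R^φ) lies in R^φ. -/
open Polynomial

/-- The invariant ring of an exponential map on an affine domain is algebraically closed
in `R`: any root of a nonzero polynomial with invariant coefficients is invariant. -/
theorem stmt8 {k R : Type*} [Field k] [CommRing R] [IsDomain R] [Algebra k R]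
    [Algebra.FiniteType k R] (φ : R →ₐ[k] Polynomial R) (hφ : IsExponentialMap φ)
    (a : R) (p : Polynomial R) (hp : p ≠ 0)
    (hcoeff : ∀ i : ℕ, φ (p.coeff i) = Polynomial.C (p.coeff i))
    (hroot : p.eval a = 0) :
    φ a = Polynomial.C a := by
  have hcomp : p.comp (φ a) = 0 := by
    have h1 : φ (p.eval a) = 0 := by rw [hroot, map_zero]
    have h2 : φ (p.eval a) = p.eval₂ (φ : R →+* Polynomial R) (φ a) := by
      rw [eval₂_eq_sum, eval_eq_sum, Polynomial.sum, map_sum, Polynomial.sum]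
      simp [map_mul, map_pow]
    have h3 : p.eval₂ (φ : R →+* Polynomial R) (φ a) = p.eval₂ C (φ a) := by
      rw [eval₂_eq_sum, eval₂_eq_sum, Polynomial.sum, Polynomial.sum]
      exact Finset.sum_congr rfl fun i _ => by rw [show (φ : R →+* Polynomial R) (p.coeff i) = φ (p.coeff i) from rfl, hcoeff i]
    rw [comp, ← h3, ← h2, h1]
  rcases comp_eq_zero_iff.mp hcomp with h | ⟨_, h⟩
  · exact absurd h hp
  · have h0 : (φ a).coeff 0 = a := by
      have := hφ.1 a
      rwa [← coeff_zero_eq_eval_zero] at this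
    rw [h, h0]
end

section
/- Let R be an affine domain over a field k, φ an exponential map on R, and S a multiplicative subset of R^φ \ {0}. Then φ extends to an exponential map S^{-1}φ on the localization S^{-1}R defined by (S^{-1}φ)(a/s) = φ(a)/s, and the invariant ring of S^{-1}φ equals S^{-1}(R^φ). Moreover, if φ is nontrivial then S^{-1}φ is nontrivial. -/
open Polynomial

/-- For a multiplicative set `S ⊆ R^φ \ {0}`, the exponential map `φ` extends to an
exponential map `S⁻¹φ` on `S⁻¹R` given by `(S⁻¹φ)(a/s) = φ(a)/s`; its invariant ring is
`S⁻¹(R^φ)`, and it is nontrivial whenever `φ` is. -/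
theorem stmt9 {k R : Type*} [Field k] [CommRing R] [IsDomain R] [Algebra k R]
    [Algebra.FiniteType k R] (φ : R →ₐ[k] Polynomial R) (hφ : IsExponentialMap φ)
    (S : Submonoid R) (hS : ∀ s ∈ S, φ s = Polynomial.C s) (h0 : (0 : R) ∉ S) :
    ∃ ψ : Localization S →ₐ[k] Polynomial (Localization S),
      IsExponentialMap ψ ∧
      (∀ (a : R) (s : S),
        ψ (Localization.mk a s) =
          Polynomial.C (Localization.mk 1 s) *
            (φ a).map (algebraMap R (Localization S))) ∧
      (∀ q : Localization S,
        ψ q = Polynomial.C q ↔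
          ∃ a : R, φ a = Polynomial.C a ∧ ∃ s : S, q = Localization.mk a s) ∧
      ((∃ a : R, φ a ≠ Polynomial.C a) →
        ∃ q : Localization S, ψ q ≠ Polynomial.C q) := by
  classical
  set ι := algebraMap R (Localization S) with hιdef
  have hSle : S ≤ nonZeroDivisors R := fun s hs =>
    mem_nonZeroDivisors_of_ne_zero (fun h => h0 (h ▸ hs))
  have hinj : Function.Injective ι := IsLocalization.injective _ hSle
  set g : R →+* Polynomial (Localization S) := (mapRingHom ι).comp φ.toRingHom with hgdef
  have hga : ∀ a : R, g a = (φ a).map ι := fun a => rfl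
  have hgs : ∀ s : S, g s = C (ι s) := fun s => by
    rw [hga, hS s s.2, map_C]
  have hg : ∀ s : S, IsUnit (g s) := fun s => by
    rw [hgs]; exact (IsLocalization.map_units (Localization S) s).map C
  set ψ₀ : Localization S →+* Polynomial (Localization S) := IsLocalization.lift hg with hψdef
  have hψι : ∀ a : R, ψ₀ (ι a) = (φ a).map ι := fun a => by
    rw [hψdef, IsLocalization.lift_eq hg a, hga]
  -- algebra structure facts
  have htower : ∀ c : k, algebraMap k (Localization S) c = ι (algebraMap k R c) := fun c =>
    IsScalarTower.algebraMap_apply k R (Localization S) c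
  have hcomm : ∀ c : k, ψ₀ (algebraMap k (Localization S) c)
      = algebraMap k (Polynomial (Localization S)) c := by
    intro c
    rw [htower, hψι, φ.commutes]
    simp only [Polynomial.algebraMap_apply, Polynomial.map_C]
    rw [← htower]
  set ψ : Localization S →ₐ[k] Polynomial (Localization S) := ⟨ψ₀, hcomm⟩ with hΨdef
  have hψeq : ∀ q, ψ q = ψ₀ q := fun q => rfl
  -- basic localization identities
  have hι1 : ∀ a : R, ι a = Localization.mk a 1 := fun a =>
    (Localization.mk_one_eq_algebraMap a).symm
  have hkey : ∀ s : S, Localization.mk 1 s * ι (s : R) = 1 := fun s => by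
    rw [hι1, Localization.mk_mul, one_mul, mul_one, Localization.mk_self]
  have hdecomp : ∀ (a : R) (s : S), Localization.mk a s = ι a * Localization.mk 1 s := by
    intro a s
    rw [hι1, Localization.mk_mul, mul_one, one_mul]
  -- inverse formula
  have hmk1 : ∀ s : S, ψ₀ (Localization.mk 1 s) = C (Localization.mk 1 s) := by
    intro s
    have hu : IsUnit (C (ι (s : R))) := (IsLocalization.map_units (Localization S) s).map C
    refine hu.mul_right_cancel ?_
    have h2 : C (ι (s : R)) = ψ₀ (ι (s : R)) := by rw [hψι, hS s s.2, map_C]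
    calc ψ₀ (Localization.mk 1 s) * C (ι (s : R))
        = ψ₀ (Localization.mk 1 s * ι (s : R)) := by rw [h2, map_mul]
      _ = 1 := by rw [hkey]; simp
      _ = C (Localization.mk 1 s) * C (ι (s : R)) := by rw [← map_mul, hkey]; simp
  have hmk : ∀ (a : R) (s : S), ψ₀ (Localization.mk a s)
      = C (Localization.mk 1 s) * (φ a).map ι := by
    intro a s
    rw [hdecomp, map_mul, hψι, hmk1, mul_comm]
  -- exponential property
  have hexp : IsExponentialMap ψ := by
    constructor
    · intro q
      induction q using Localization.induction_on with
      | H x =>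
        obtain ⟨a, s⟩ := x
        rw [hψeq, hmk, eval_mul, eval_C, eval_zero_map, hφ.1, mul_comm, ← hdecomp]
    · intro q
      induction q using Localization.induction_on with
      | H x =>
        obtain ⟨a, s⟩ := x
        have hψψ : ψ₀.comp ι = g := RingHom.ext hψι
        have hψtR : (ψ.toRingHom : Localization S →+* Polynomial (Localization S)) = ψ₀ := rfl
        rw [hψtR, hψeq, hmk]
        rw [Polynomial.map_mul, Polynomial.map_C, hmk1]
        rw [Polynomial.map_map, hψψ, hgdef, ← Polynomial.map_map, hφ.2]
        have h1 : (mapRingHom (mapRingHom ι)) ((φ a).eval₂ (C.comp C) (X + C X))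
            = (φ a).eval₂ ((mapRingHom (mapRingHom ι)).comp (C.comp C))
              ((mapRingHom (mapRingHom ι)) (X + C X)) := hom_eval₂ _ _ _ _
        rw [coe_mapRingHom] at h1
        rw [h1]
        rw [eval₂_mul, eval₂_C, eval₂_map]
        congr 1
        · congr 1
          · ext r; simp
          · simp
  refine ⟨ψ, hexp, ?_, ?_, ?_⟩
  · intro a s
    exact hmk a s
  · intro q
    constructor
    · intro hq
      induction q using Localization.induction_on with
      | H x =>
        obtain ⟨b, t⟩ := x
        rw [hψeq, hmk] at hq
        have hbt : Localization.mk b t * ι (t : R) = ι b := by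
          rw [hdecomp, mul_assoc, hkey, mul_one]
        have h3 := congrArg (fun p => p * C (ι (t : R))) hq
        simp only [] at h3
        rw [mul_comm (C (Localization.mk 1 t)), mul_assoc, ← map_mul, hkey, map_one,
          mul_one, ← map_mul, hbt] at h3
        have h4 : φ b = C b := Polynomial.map_injective ι hinj
          (by rw [h3, Polynomial.map_C])
        exact ⟨b, h4, t, rfl⟩
    · rintro ⟨a, ha, s, rfl⟩
      rw [hψeq, hmk, ha, Polynomial.map_C, ← map_mul]
      exact congrArg C (by rw [mul_comm, ← hdecomp])
  · rintro ⟨a, ha⟩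
    refine ⟨ι a, fun h => ha ?_⟩
    rw [hψeq, hψι] at h
    exact Polynomial.map_injective ι hinj (h.trans (Polynomial.map_C ι).symm)
end

section
/- Let k be a field and V = k[X₁,…,Xₙ,Y,Z,T]/(X^d Y − Z^r, X^e T − Y^s) where d, e ∈ ℤ^n have all entries ≥ 1, r ≥ 2 and s ≥ 2. Then V is an integral domain. -/
/-!
Send `Xᵢ ↦ xᵢ`, `Z ↦ z`, `Y ↦ z^r x^{-d}` and `T ↦ z^{rs} x^{-(sd+e)}` into the Laurent
polynomial ring `k[x^{±1}, z^{±1}]`, a domain; both generators of the ideal are killed. The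
kernel is no bigger than the ideal: modulo the ideal every monomial reduces (`Z^r → X^d Y`, then
`Y^s → X^e T`) to some `X^a Y^b Z^c T^m` with `b < s` and `c < r`, and such a monomial can be
read off its image, whose `z`-exponent is `c + r (b + s m)`.
-/

open MvPolynomial

noncomputable section

/-- The defining ideal `(X^d Y − Z^r, X^e T − Y^s)` inside
`k[X₁,…,Xₙ,Y,Z,T] = MvPolynomial (Fin n ⊕ Fin 3) k` (`inr 0 = Y`, `inr 1 = Z`,
`inr 2 = T`). -/
def vIdeal (k : Type*) [Field k] (n : ℕ) (d e : Fin n → ℕ) (r s : ℕ) :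
    Ideal (MvPolynomial (Fin n ⊕ Fin 3) k) :=
  Ideal.span
    {(∏ i, MvPolynomial.X (Sum.inl i) ^ d i) * MvPolynomial.X (Sum.inr 0) -
       MvPolynomial.X (Sum.inr 1) ^ r,
     (∏ i, MvPolynomial.X (Sum.inl i) ^ e i) * MvPolynomial.X (Sum.inr 2) -
       MvPolynomial.X (Sum.inr 0) ^ s}

theorem mul_pow_eq_of_mul_eq_pow {M : Type*} [CommMonoid M] {P Q y z t : M} {r s : ℕ}
    (hz : P * y = z ^ r) (hy : Q * t = y ^ s) (b c m : ℕ) :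
    y ^ b * z ^ c * t ^ m =
      P ^ (c / r) * Q ^ ((b + c / r) / s) *
        y ^ ((b + c / r) % s) * z ^ (c % r) * t ^ (m + (b + c / r) / s) := by
  have hzc : z ^ c = z ^ (c % r) * (P * y) ^ (c / r) := by
    rw [hz, ← pow_mul, ← pow_add, Nat.mod_add_div]
  have hyB : y ^ (b + c / r) = y ^ ((b + c / r) % s) * (Q * t) ^ ((b + c / r) / s) := by
    rw [hy, ← pow_mul, ← pow_add, Nat.mod_add_div]
  calc y ^ b * z ^ c * t ^ m
      = P ^ (c / r) * y ^ (b + c / r) * z ^ (c % r) * t ^ m := by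
        rw [hzc, mul_pow, pow_add]; ac_rfl
    _ = _ := by rw [hyB, pow_add t, mul_pow]; ac_rfl

namespace MvPolynomial

theorem monomial_one_eq_prod {R σ : Type*} [CommSemiring R] [Fintype σ] (u : σ →₀ ℕ) :
    monomial u (1 : R) = ∏ j, X j ^ u j := by
  rw [monomial_eq, C_1, one_mul, Finsupp.prod_fintype _ _ fun _ => pow_zero _]

variable {k σ G : Type*} [CommRing k] [AddCommMonoid G]

theorem mapDomainRingHom_monomial (L : (σ →₀ ℕ) →+ G) (u : σ →₀ ℕ) (c : k) :
    AddMonoidAlgebra.mapDomainRingHom k L (monomial u c) = AddMonoidAlgebra.single (L u) c :=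
  AddMonoidAlgebra.mapDomain_single

theorem monomial_sub_monomial_mem_ker_mapDomainRingHom (L : (σ →₀ ℕ) →+ G)
    {u v : σ →₀ ℕ} (h : L u = L v) :
    monomial u (1 : k) - monomial v 1 ∈ RingHom.ker (AddMonoidAlgebra.mapDomainRingHom k L) := by
  rw [RingHom.mem_ker, map_sub, mapDomainRingHom_monomial, mapDomainRingHom_monomial, h,
    sub_self]

/-- `single γ 1 ↦ N γ` is a left inverse `k[G] → k[σ] ⧸ I` of the monomial map mod `I`. -/
theorem ker_mapDomainRingHom_le {I : Ideal (MvPolynomial σ k)} (L : (σ →₀ ℕ) →+ G)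
    (N : G → σ →₀ ℕ) (hN : ∀ u, monomial u 1 - monomial (N (L u)) 1 ∈ I) :
    RingHom.ker (AddMonoidAlgebra.mapDomainRingHom k L) ≤ I := by
  let π := Ideal.Quotient.mkₐ k I
  let ψ := (AddMonoidAlgebra.basis G k).constr k fun γ => π (monomial (N γ) 1)
  have hψ : ∀ p, ψ (AddMonoidAlgebra.mapDomainRingHom k L p) = π p := by
    intro p
    induction p using MvPolynomial.induction_on' with
    | monomial u c =>
      have hu : π (monomial (N (L u)) 1) = π (monomial u 1) :=
        (Ideal.Quotient.mk_eq_mk_iff_sub_mem _ _).mpr (by simpa using neg_mem (hN u))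
      rw [mapDomainRingHom_monomial, ← mul_one c, ← smul_eq_mul,
        ← AddMonoidAlgebra.smul_single, ← smul_monomial, map_smul, map_smul,
        ← AddMonoidAlgebra.basis_apply, Module.Basis.constr_basis, hu]
    | add p q hp hq => rw [map_add, map_add, hp, hq, map_add]
  intro p hp
  rw [← Ideal.Quotient.eq_zero_iff_mem, ← Ideal.Quotient.mkₐ_eq_mk k, ← hψ,
    RingHom.mem_ker.mp hp, map_zero]

end MvPolynomial

namespace vIdeal

variable {n : ℕ} (d e : Fin n → ℕ) (r s : ℕ)

def exponent (a : Fin n → ℕ) (b c m : ℕ) : Fin n ⊕ Fin 3 →₀ ℕ :=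
  Finsupp.equivFunOnFinite.symm (Sum.elim a ![b, c, m])

theorem monomial_one_eq_prod_sum {R : Type*} [CommSemiring R] (u : Fin n ⊕ Fin 3 →₀ ℕ) :
    monomial u (1 : R) = (∏ i, X (.inl i) ^ u (.inl i)) * X (.inr 0) ^ u (.inr 0) *
      X (.inr 1) ^ u (.inr 1) * X (.inr 2) ^ u (.inr 2) := by
  rw [monomial_one_eq_prod, Fintype.prod_sum_type, Fin.prod_univ_three]; ring

theorem monomial_exponent {R : Type*} [CommSemiring R] (a : Fin n → ℕ) (b c m : ℕ) :
    monomial (exponent a b c m) (1 : R) =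
      (∏ i, X (.inl i) ^ a i) * X (.inr 0) ^ b * X (.inr 1) ^ c * X (.inr 2) ^ m := by
  simp [monomial_one_eq_prod_sum, exponent]

/-- The exponent of the image of a monomial in `k[x^{±1}, z^{±1}]`. -/
def weight : (Fin n ⊕ Fin 3 →₀ ℕ) →+ (Fin n → ℤ) × ℤ :=
  AddMonoidHom.mk'
    (fun u => (fun i => u (.inl i) - u (.inr 0) * d i - u (.inr 2) * (s * d i + e i),
      u (.inr 1) + r * u (.inr 0) + r * s * u (.inr 2)))
    fun u v => by ext <;> simp <;> ring

theorem weight_fst_apply (u : Fin n ⊕ Fin 3 →₀ ℕ) (i : Fin n) :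
    (weight d e r s u).1 i = u (.inl i) - u (.inr 0) * d i - u (.inr 2) * (s * d i + e i : ℤ) :=
  rfl

theorem toNat_weight_snd (u : Fin n ⊕ Fin 3 →₀ ℕ) :
    (weight d e r s u).2.toNat = u (.inr 1) + r * (u (.inr 0) + s * u (.inr 2)) := by
  rw [← Int.toNat_natCast (_ + _)]
  congr 1
  simp only [weight, AddMonoidHom.mk'_apply]
  push_cast
  ring

/-- The reduced monomial with image `γ`: `c`, `b`, `m` are the base-`(r, s)` digits of the
`z`-exponent `c + r (b + s m)`, and then the `x`-exponent gives `a`. -/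
def normalForm (γ : (Fin n → ℤ) × ℤ) : Fin n ⊕ Fin 3 →₀ ℕ :=
  let q := γ.2.toNat / r
  exponent (fun i => (γ.1 i + (q % s : ℕ) * d i + (q / s : ℕ) * (s * d i + e i)).toNat)
    (q % s) (γ.2.toNat % r) (q / s)

theorem normalForm_weight (hr : 0 < r) (hs : 0 < s) (u : Fin n ⊕ Fin 3 →₀ ℕ) :
    normalForm d e r s (weight d e r s u) =
      exponent
        (fun i => u (.inl i) + u (.inr 1) / r * d i + (u (.inr 0) + u (.inr 1) / r) / s * e i)
        ((u (.inr 0) + u (.inr 1) / r) % s) (u (.inr 1) % r)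
        (u (.inr 2) + (u (.inr 0) + u (.inr 1) / r) / s) := by
  simp only [normalForm, toNat_weight_snd]
  set b := u (.inr 0)
  set c := u (.inr 1)
  set m := u (.inr 2)
  set B := b + c / r
  have hq : (c + r * (b + s * m)) / r = B + s * m := by
    rw [Nat.add_mul_div_left _ _ hr]; omega
  have hdiv : (B + s * m) / s = m + B / s := by
    rw [Nat.add_mul_div_left _ _ hs]; omega
  have hBz : ((B % s : ℕ) : ℤ) + s * (B / s : ℕ) = b + (c / r : ℕ) := by
    exact_mod_cast Nat.mod_add_div B s
  simp only [hq, hdiv, Nat.add_mul_mod_self_left]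
  congr 1
  funext i
  refine (congrArg Int.toNat ?_).trans (Int.toNat_natCast _)
  rw [weight_fst_apply]
  simp only [Nat.cast_add, Nat.cast_mul]
  linear_combination (d i : ℤ) * hBz

variable {k : Type*} [Field k]

theorem monomial_sub_monomial_normalForm_mem (hr : 0 < r) (hs : 0 < s)
    (u : Fin n ⊕ Fin 3 →₀ ℕ) :
    monomial u 1 - monomial (normalForm d e r s (weight d e r s u)) 1 ∈ vIdeal k n d e r s := by
  rw [← Ideal.Quotient.mk_eq_mk_iff_sub_mem, normalForm_weight d e r s hr hs, monomial_exponent,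
    monomial_one_eq_prod_sum]
  set π := Ideal.Quotient.mk (vIdeal k n d e r s)
  have hz : π (∏ i, X (.inl i) ^ d i) * π (X (.inr 0)) = π (X (.inr 1)) ^ r := by
    rw [← map_mul, ← map_pow, Ideal.Quotient.mk_eq_mk_iff_sub_mem]
    exact Ideal.subset_span (.inl rfl)
  have hy : π (∏ i, X (.inl i) ^ e i) * π (X (.inr 2)) = π (X (.inr 0)) ^ s := by
    rw [← map_mul, ← map_pow, Ideal.Quotient.mk_eq_mk_iff_sub_mem]
    exact Ideal.subset_span (.inr rfl)
  have hred := mul_pow_eq_of_mul_eq_pow hz hy (u (.inr 0)) (u (.inr 1)) (u (.inr 2))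
  simp only [map_mul, map_pow, mul_assoc] at hred ⊢
  rw [hred]
  simp only [pow_add, pow_mul', Finset.prod_mul_distrib, Finset.prod_pow, map_mul, map_pow]
  ring

theorem le_ker :
    vIdeal k n d e r s ≤ RingHom.ker (AddMonoidAlgebra.mapDomainRingHom k (weight d e r s)) := by
  rw [vIdeal, Ideal.span_le]
  rintro p (rfl | rfl)
  · have h := monomial_sub_monomial_mem_ker_mapDomainRingHom (k := k) (weight d e r s)
      (u := exponent d 1 0 0) (v := exponent 0 0 r 0) (by ext <;> simp [weight, exponent])
    simpa [monomial_exponent] using h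
  · have h := monomial_sub_monomial_mem_ker_mapDomainRingHom (k := k) (weight d e r s)
      (u := exponent e 0 0 1) (v := exponent 0 s 0 0) (by ext <;> simp [weight, exponent])
    simpa [monomial_exponent] using h

theorem eq_ker (hr : 0 < r) (hs : 0 < s) :
    vIdeal k n d e r s = RingHom.ker (AddMonoidAlgebra.mapDomainRingHom k (weight d e r s)) :=
  le_antisymm (le_ker d e r s) <| ker_mapDomainRingHom_le _ _ <|
    monomial_sub_monomial_normalForm_mem d e r s hr hs

end vIdeal

theorem stmt11_general {k : Type*} [Field k] (n : ℕ) (d e : Fin n → ℕ)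
    (r s : ℕ) (hr : 2 ≤ r) (hs : 2 ≤ s) :
    IsDomain (MvPolynomial (Fin n ⊕ Fin 3) k ⧸ vIdeal k n d e r s) := by
  rw [vIdeal.eq_ker d e r s (by omega) (by omega)]
  have := RingHom.ker_isPrime (AddMonoidAlgebra.mapDomainRingHom k (vIdeal.weight d e r s))
  exact Ideal.Quotient.isDomain _

/-- `V = k[X₁,…,Xₙ,Y,Z,T]/(X^d Y − Z^r, X^e T − Y^s)` is an integral domain when all
entries of `d`, `e` are ≥ 1, `r ≥ 2` and `s ≥ 2`. -/
theorem stmt11 {k : Type*} [Field k] (n : ℕ) (hn : 1 ≤ n) (d e : Fin n → ℕ)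
    (hd : ∀ i, 1 ≤ d i) (he : ∀ i, 1 ≤ e i) (r s : ℕ) (hr : 2 ≤ r) (hs : 2 ≤ s) :
    IsDomain (MvPolynomial (Fin n ⊕ Fin 3) k ⧸ vIdeal k n d e r s) :=
  stmt11_general n d e r s hr hs

end
end

section
/- Let k be a field, P(X₁,…,Xₙ,Z) ∈ k[X,Z] monic in Z, and fix j ∈ {1,…,n}. Suppose r(X) ∈ k[X₁,…,Xₙ], g₁, g₂ ∈ k[X,Z] satisfy (∂P/∂Z)·r(X) = X^d·g₁ + P·g₂ where d has all entries ≥ 1, k has characteristic zero and deg_Z P ≥ 1. If l_j is the exact power of X_j dividing r(X) and l_j < d_j, then setting X_j = 0 yields a contradiction; consequently X_j^{d_j} divides r(X) for every j, i.e., X^d divides r(X). -/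
open Polynomial MvPolynomial

section Aux

variable {k : Type*} [Field k] {n : ℕ}

/-- The substitution `X j ↦ 0`, as a ring hom. -/
noncomputable def subZero (k : Type*) [Field k] {n : ℕ} (j : Fin n) :
    MvPolynomial (Fin n) k →+* MvPolynomial (Fin n) k :=
  (MvPolynomial.aeval (R := k) (S₁ := MvPolynomial (Fin n) k)
    (fun i => if i = j then 0 else MvPolynomial.X i)).toRingHom

@[simp] lemma subZero_C (j : Fin n) (a : k) :
    subZero k j (MvPolynomial.C a) = MvPolynomial.C a := by
  simp [subZero]

lemma subZero_X (j : Fin n) (i : Fin n) :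
    subZero k j (MvPolynomial.X i) = if i = j then 0 else MvPolynomial.X i := by
  simp [subZero]

/-- Substituting `X j ↦ 0` changes an element only by a multiple of `X j`. -/
lemma aux_Xdvd_sub (j : Fin n) (c : MvPolynomial (Fin n) k) :
    (MvPolynomial.X j : MvPolynomial (Fin n) k) ∣ c - subZero k j c := by
  induction c using MvPolynomial.induction_on with
  | C a => simp
  | add p q hp hq =>
    have heq : p + q - subZero k j (p + q)
        = (p - subZero k j p) + (q - subZero k j q) := by
      rw [map_add]; ring
    rw [heq]; exact dvd_add hp hq
  | mul_X p i hp =>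
    rw [map_mul, subZero_X]
    by_cases hij : i = j
    · subst hij
      rw [if_pos rfl, mul_zero, sub_zero]
      exact Dvd.intro_left p rfl
    · rw [if_neg hij]
      have heq : p * MvPolynomial.X i - subZero k j p * MvPolynomial.X i
          = (p - subZero k j p) * MvPolynomial.X i := by ring
      rw [heq]
      exact hp.mul_right _

lemma aux_Xdvd_iff (j : Fin n) (c : MvPolynomial (Fin n) k) :
    subZero k j c = 0 ↔ (MvPolynomial.X j : MvPolynomial (Fin n) k) ∣ c := by
  constructor
  · intro h0
    have := aux_Xdvd_sub j c
    rwa [h0, sub_zero] at this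
  · rintro ⟨e, rfl⟩
    rw [map_mul, subZero_X, if_pos rfl, zero_mul]

end Aux

/-- If `(∂P/∂Z)·r(X) = X^d·g₁ + P·g₂` with `P ∈ k[X₁,…,Xₙ][Z]` monic in `Z` of degree ≥ 1,
`k` of characteristic zero and all `dᵢ ≥ 1`, then `X_j^{d_j}` divides `r` for every `j`,
i.e. `X^d` divides `r`. -/
theorem stmt16 {k : Type*} [Field k] [CharZero k] (n : ℕ) (d : Fin n → ℕ)
    (hd : ∀ i, 1 ≤ d i)
    (P : Polynomial (MvPolynomial (Fin n) k)) (hP : P.Monic) (hdeg : 1 ≤ P.natDegree)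
    (r : MvPolynomial (Fin n) k) (g₁ g₂ : Polynomial (MvPolynomial (Fin n) k))
    (h : Polynomial.derivative P * Polynomial.C r =
        Polynomial.C (∏ i, MvPolynomial.X i ^ d i) * g₁ + P * g₂) :
    (∏ i, MvPolynomial.X i ^ d i : MvPolynomial (Fin n) k) ∣ r := by
  classical
  -- Step 1: each `X j ^ d j` divides `r`
  have key : ∀ j : Fin n, (MvPolynomial.X j : MvPolynomial (Fin n) k) ^ d j ∣ r := by
    intro j
    set φ : MvPolynomial (Fin n) k →+* MvPolynomial (Fin n) k := subZero k j with hφdef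
    have hφ : ∀ c : MvPolynomial (Fin n) k,
        φ c = 0 ↔ (MvPolynomial.X j : MvPolynomial (Fin n) k) ∣ c := fun c => aux_Xdvd_iff j c
    have hXne : (MvPolynomial.X j : MvPolynomial (Fin n) k) ≠ 0 := MvPolynomial.X_ne_zero j
    have hCXne : (Polynomial.C (MvPolynomial.X j) :
        Polynomial (MvPolynomial (Fin n) k)) ≠ 0 := by
      simpa using hXne
    have hP0 : (P.map φ).Monic := hP.map φ
    have hP0deg : (P.map φ).natDegree = P.natDegree := hP.natDegree_map φ
    -- `C (X j) ∣ h ↔ h.map φ = 0`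
    have hCXdvd : ∀ g : Polynomial (MvPolynomial (Fin n) k),
        Polynomial.C (MvPolynomial.X j) ∣ g ↔ g.map φ = 0 := by
      intro g
      rw [Polynomial.C_dvd_iff_dvd_coeff]
      constructor
      · intro hg
        refine Polynomial.ext fun i => ?_
        rw [Polynomial.coeff_map, Polynomial.coeff_zero, hφ]
        exact hg i
      · intro hg i
        rw [← hφ, ← Polynomial.coeff_map, hg, Polynomial.coeff_zero]
    -- content lemma : `X j ^ m` can be pulled out of `g` from `P * g`
    have content : ∀ m : ℕ, ∀ g : Polynomial (MvPolynomial (Fin n) k),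
        Polynomial.C ((MvPolynomial.X j : MvPolynomial (Fin n) k) ^ m) ∣ P * g →
        Polynomial.C ((MvPolynomial.X j : MvPolynomial (Fin n) k) ^ m) ∣ g := by
      intro m
      induction m with
      | zero => intro g _; simp
      | succ m ih =>
        intro g hg
        have h1 : Polynomial.C (MvPolynomial.X j) ∣ P * g := by
          refine dvd_trans ?_ hg
          exact map_dvd Polynomial.C (dvd_pow_self _ (Nat.succ_ne_zero m))
        rw [hCXdvd, Polynomial.map_mul, mul_eq_zero] at h1
        have hg0 : g.map φ = 0 := h1.resolve_left hP0.ne_zero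
        obtain ⟨g', rfl⟩ := (hCXdvd g).mpr hg0
        have h2 : Polynomial.C (MvPolynomial.X j) * Polynomial.C ((MvPolynomial.X j) ^ m) ∣
            Polynomial.C (MvPolynomial.X j) * (P * g') := by
          have e1 : Polynomial.C (MvPolynomial.X j) * Polynomial.C ((MvPolynomial.X j) ^ m)
              = (Polynomial.C ((MvPolynomial.X j) ^ (m + 1)) :
                  Polynomial (MvPolynomial (Fin n) k)) := by
            rw [pow_succ, Polynomial.C_mul]; ring
          have e2 : P * (Polynomial.C (MvPolynomial.X j) * g')
              = Polynomial.C (MvPolynomial.X j) * (P * g') := by ring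
          rw [e1, ← e2]; exact hg
        rw [mul_dvd_mul_iff_left hCXne] at h2
        obtain ⟨g'', hg''⟩ := ih g' h2
        exact ⟨g'', by rw [hg'', pow_succ', Polynomial.C_mul]; ring⟩
    -- main step : bump the power of `X j` dividing `r`
    have step : ∀ m : ℕ, m ≤ d j →
        (MvPolynomial.X j : MvPolynomial (Fin n) k) ^ m ∣ r := by
      intro m
      induction m with
      | zero => intro _; rw [pow_zero]; exact one_dvd r
      | succ m ih =>
        intro hm
        obtain ⟨r₁, hr₁⟩ := ih (Nat.le_of_succ_le hm)
        -- split the monomial product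
        have hprod : (MvPolynomial.X j : MvPolynomial (Fin n) k) ^ (m + 1) ∣
            ∏ i, MvPolynomial.X i ^ d i :=
          dvd_trans (pow_dvd_pow _ hm)
            (Finset.dvd_prod_of_mem (fun i => MvPolynomial.X i ^ d i) (Finset.mem_univ j))
        obtain ⟨t, ht⟩ := hprod
        -- rewrite the hypothesis and cancel `C (X j ^ m)`
        have hCne : (Polynomial.C ((MvPolynomial.X j : MvPolynomial (Fin n) k) ^ m) :
            Polynomial (MvPolynomial (Fin n) k)) ≠ 0 := by
          simpa using pow_ne_zero m hXne
        have hdvd2 : Polynomial.C ((MvPolynomial.X j : MvPolynomial (Fin n) k) ^ m) ∣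
            P * g₂ := by
          have e : P * g₂ =
              Polynomial.C ((MvPolynomial.X j) ^ m) *
                (Polynomial.derivative P * Polynomial.C r₁
                  - Polynomial.C (MvPolynomial.X j * t) * g₁) := by
            have h' := h
            rw [hr₁, ht] at h'
            simp only [pow_succ, Polynomial.C_mul] at h' ⊢
            linear_combination -h'
          exact ⟨_, e⟩
        obtain ⟨g₂', hg₂'⟩ := content m g₂ hdvd2
        have heq : Polynomial.derivative P * Polynomial.C r₁
            = Polynomial.C (MvPolynomial.X j * t) * g₁ + P * g₂' := by
          apply mul_left_cancel₀ hCne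
          have h' := h
          rw [hr₁, ht, hg₂'] at h'
          simp only [pow_succ, Polynomial.C_mul] at h' ⊢
          linear_combination h'
        -- map `X j ↦ 0`
        have hmap : (Polynomial.derivative P).map φ * Polynomial.C (φ r₁)
            = P.map φ * g₂'.map φ := by
          have := congrArg (Polynomial.map φ) heq
          rw [Polynomial.map_add, Polynomial.map_mul, Polynomial.map_mul,
            Polynomial.map_mul, Polynomial.map_C, Polynomial.map_C] at this
          have hz : φ (MvPolynomial.X j * t) = 0 := by
            rw [hφ]; exact Dvd.intro t rfl
          rw [hz, Polynomial.C_0, zero_mul, zero_add] at this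
          exact this
        -- degree argument : `φ r₁ = 0`
        have hr₁0 : φ r₁ = 0 := by
          by_contra hne
          have hD0 : (Polynomial.derivative P).map φ ≠ 0 := by
            rw [← Polynomial.derivative_map]
            intro hzero
            have hN : (P.map φ).natDegree ≠ 0 := by omega
            have hc := Polynomial.coeff_derivative (P.map φ) ((P.map φ).natDegree - 1)
            rw [hzero, Polynomial.coeff_zero,
              Nat.sub_add_cancel (Nat.one_le_iff_ne_zero.mpr hN),
              Polynomial.Monic.coeff_natDegree hP0, one_mul] at hc
            have hcast : (((P.map φ).natDegree : ℕ) : MvPolynomial (Fin n) k) = 0 := by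
              conv_lhs => rw [← Nat.sub_add_cancel (Nat.one_le_iff_ne_zero.mpr hN)]
              push_cast
              linear_combination -hc
            exact hN (Nat.cast_eq_zero.mp hcast)
          have hCφne : (Polynomial.C (φ r₁) : Polynomial (MvPolynomial (Fin n) k)) ≠ 0 := by
            simpa using hne
          have hLne : (Polynomial.derivative P).map φ * Polynomial.C (φ r₁) ≠ 0 :=
            mul_ne_zero hD0 hCφne
          have hg₂'ne : g₂'.map φ ≠ 0 := by
            intro hz
            rw [hmap, hz, mul_zero] at hLne
            exact hLne rfl
          have hdegL : ((Polynomial.derivative P).map φ * Polynomial.C (φ r₁)).natDegree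
              < (P.map φ).natDegree := by
            rw [Polynomial.natDegree_mul hD0 hCφne, Polynomial.natDegree_C, add_zero,
              ← Polynomial.derivative_map]
            exact Polynomial.natDegree_derivative_lt (by omega)
          have hdegR : (P.map φ).natDegree ≤ (P.map φ * g₂'.map φ).natDegree := by
            rw [Polynomial.natDegree_mul hP0.ne_zero hg₂'ne]
            exact Nat.le_add_right _ _
          rw [hmap] at hdegL
          omega
        obtain ⟨r₂, hr₂⟩ := (hφ r₁).mp hr₁0
        exact ⟨r₂, by rw [hr₁, hr₂, pow_succ]; ring⟩
    exact step (d j) le_rfl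
  -- Step 2: conclude divisibility by the product
  set D : Fin n →₀ ℕ := Finsupp.equivFunOnFinite.symm d with hD
  have hDi : ∀ i, D i = d i := fun i => rfl
  have hprodD : (∏ i, MvPolynomial.X i ^ d i : MvPolynomial (Fin n) k)
      = MvPolynomial.monomial D 1 := by
    rw [← MvPolynomial.prod_X_pow_eq_monomial]
    refine (Finset.prod_subset (Finset.subset_univ _) ?_).symm
    intro x _ hx
    rw [Finsupp.notMem_support_iff] at hx
    rw [hDi] at hx
    rw [hx, pow_zero]
  -- each coefficient in the support dominates `D`
  have hsupp : ∀ m ∈ r.support, D ≤ m := by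
    intro m hm
    rw [Finsupp.le_iff]
    intro i hi
    rw [hDi]
    have hkey := key i
    rw [MvPolynomial.X_pow_eq_monomial,
      MvPolynomial.monomial_one_dvd_iff_modMonomial_eq_zero] at hkey
    by_contra hlt
    have hnle : ¬ Finsupp.single i (d i) ≤ m := by
      rw [Finsupp.single_le_iff]
      omega
    have := MvPolynomial.coeff_modMonomial_of_not_le r hnle
    rw [hkey, MvPolynomial.coeff_zero] at this
    exact (MvPolynomial.mem_support_iff.mp hm) this.symm
  rw [hprodD, MvPolynomial.monomial_one_dvd_iff_modMonomial_eq_zero]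
  ext m
  rw [MvPolynomial.coeff_zero]
  by_cases hle : D ≤ m
  · exact MvPolynomial.coeff_modMonomial_of_le r hle
  · rw [MvPolynomial.coeff_modMonomial_of_not_le r hle]
    by_contra hne
    exact hle (hsupp m (MvPolynomial.mem_support_iff.mpr hne))
end
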